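/- Let U ∈ H^{1/2}₊(𝕋;ℂ^{M×N}), V ∈ H^{1/2}₊(𝕋;ℂ^{P×N}), W ∈ H^{1/2}₊(𝕋;ℂ^{P×Q}). Then the double shifted Hankel operators satisfy K^r_U K^l_V = T^r_{UV*} − T^r_U T^r_{V*} as operators on L²₊(𝕋;ℂ^{P×d}), and K^l_V K^r_W = T^l_{W*V} − T^l_V T^l_{W*} as operators on L²₊(𝕋;ℂ^{d×Q}). -/

import Mathlib

open MeasureTheory Complex Matrix
open scoped Real ENNReal

noncomputable section

abbrev Tc := AddCircle (2 * Real.pi)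

abbrev Mat (M N : ℕ) := Matrix (Fin M) (Fin N) ℂ

attribute [local instance] Matrix.normedAddCommGroup Matrix.normedSpace

instance : Fact (0 < 2 * Real.pi) := ⟨by positivity⟩

/-- Fourier coefficient of a matrix-valued function on the torus. -/
def mcoeff {M N : ℕ} (F : Tc → Mat M N) (n : ℤ) : Mat M N := fourierCoeff F n

/-- Membership in the Hardy space `L²₊`: square integrable with vanishing
negative Fourier modes. -/
def Hardy {M N : ℕ} (F : Tc → Mat M N) : Prop :=
  MemLp F 2 volume ∧ ∀ n : ℤ, n < 0 → mcoeff F n = 0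

/-- `V` is (a representative of) the Szegő projection `Π_{≥0} U` of `U`. -/
def IsProj {M N : ℕ} (U V : Tc → Mat M N) : Prop :=
  MemLp V 2 volume ∧ ∀ n : ℤ, mcoeff V n = if 0 ≤ n then mcoeff U n else 0


/-- Squared Frobenius norm of a matrix. -/
def frobSq {M N : ℕ} (A : Mat M N) : ℝ := ∑ k, ∑ j, ‖A k j‖ ^ 2

/-- Membership in `H^{1/2}₊(𝕋; ℂ^{M×N})`: Hardy plus finiteness of the `H^{1/2}`
Sobolev norm. -/
def InHhalfPlus {M N : ℕ} (U : Tc → Mat M N) : Prop :=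
  Hardy U ∧ Summable (fun n : ℤ => Real.sqrt (1 + (n : ℝ) ^ 2) * frobSq (mcoeff U n))

/-- The `L²` inner product `⟨A, B⟩ = (1/2π) ∫ tr(A(x) B(x)*) dx` on matrix-valued
functions. -/
def l2inner {M N : ℕ} (A B : Tc → Mat M N) : ℂ :=
  (1 / (2 * Real.pi) : ℂ) • ∫ x : Tc, Matrix.trace (A x * (B x)ᴴ)

/-- Membership in `H¹₊(𝕋; ℂ^{M×N})`. -/
def InH1Plus {M N : ℕ} (G : Tc → Mat M N) : Prop :=
  Hardy G ∧ Summable (fun n : ℤ => (1 + (n : ℝ) ^ 2) * frobSq (mcoeff G n))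

/-! ### Auxiliary lemmas -/

open AddCircle
open scoped ComplexConjugate

def matContENorm {M N : ℕ} : ContinuousENorm (Mat M N) := SeminormedAddGroup.toContinuousENorm

section MatAux

attribute [local instance] matContENorm

lemma twopi_ne_zero' : ENNReal.ofReal (2*Real.pi) ≠ 0 :=
  (ENNReal.ofReal_pos.mpr (by positivity)).ne'

lemma memHaar {E : Type*} [NormedAddCommGroup E] {p : ℝ≥0∞} {f : Tc → E}
    (hf : MemLp f p volume) : MemLp f p (AddCircle.haarAddCircle) := by
  have := hf.smul_measure (c := (ENNReal.ofReal (2*Real.pi))⁻¹) (by simp [Real.pi_pos])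
  rwa [AddCircle.volume_eq_smul_haarAddCircle, smul_smul,
    ENNReal.inv_mul_cancel twopi_ne_zero' ENNReal.ofReal_ne_top, one_smul] at this

lemma aeVol {P : Tc → Prop} (h : ∀ᵐ x ∂(AddCircle.haarAddCircle : Measure Tc), P x) :
    ∀ᵐ x ∂(volume : Measure Tc), P x := by
  rw [AddCircle.volume_eq_smul_haarAddCircle]
  exact Measure.ae_smul_measure h _

lemma entry_memℒp {M N : ℕ} {p : ℝ≥0∞} {F : Tc → Mat M N} (hF : MemLp F p volume)
    (i : Fin M) (j : Fin N) : MemLp (fun x => F x i j) p volume :=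
  ((Matrix.entryLinearMap ℂ ℂ i j).toContinuousLinearMap).comp_memLp' hF

lemma norm_matmul_le {A B C : ℕ} (X : Mat A B) (Y : Mat B C) :
    ‖X * Y‖ ≤ (B : ℝ) * ‖X‖ * ‖Y‖ := by
  have hnn : (0:ℝ) ≤ (B : ℝ) * ‖X‖ * ‖Y‖ := by positivity
  rw [Matrix.norm_le_iff hnn]
  intro i j
  rw [Matrix.mul_apply]
  calc ‖∑ k, X i k * Y k j‖ ≤ ∑ k, ‖X i k * Y k j‖ := norm_sum_le _ _
    _ ≤ ∑ k : Fin B, ‖X‖ * ‖Y‖ := by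
        refine Finset.sum_le_sum fun k _ => ?_
        rw [norm_mul]
        exact mul_le_mul (Matrix.norm_entry_le_entrywise_sup_norm X)
          (Matrix.norm_entry_le_entrywise_sup_norm Y) (norm_nonneg _) (norm_nonneg _)
    _ = (B : ℝ) * ‖X‖ * ‖Y‖ := by simp [Finset.sum_const, mul_assoc]

lemma norm_conjT {A B : ℕ} (X : Mat A B) : ‖Xᴴ‖ = ‖X‖ := by
  apply le_antisymm
  · rw [Matrix.norm_le_iff (norm_nonneg X)]
    intro i j
    simpa [Matrix.conjTranspose_apply] using Matrix.norm_entry_le_entrywise_sup_norm X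
  · rw [Matrix.norm_le_iff (norm_nonneg Xᴴ)]
    intro i j
    have := Matrix.norm_entry_le_entrywise_sup_norm Xᴴ (i := j) (j := i)
    simpa [Matrix.conjTranspose_apply] using this

lemma fourier_memTop (n : ℤ) :
    MemLp (fun x : Tc => fourier n x) ⊤ (AddCircle.haarAddCircle) :=
  memLp_top_of_bound ((fourier n).continuous.aestronglyMeasurable) 1
    (Filter.Eventually.of_forall fun x => by
      rw [← fourier_norm (T := 2*Real.pi) n]
      exact ((fourier n) : C(Tc, ℂ)).norm_coe_le_norm x)

lemma aesm_matmul {A B C : ℕ} {F : Tc → Mat A B} {G : Tc → Mat B C} {μ : Measure Tc}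
    (hF : AEStronglyMeasurable F μ) (hG : AEStronglyMeasurable G μ) :
    AEStronglyMeasurable (fun x => F x * G x) μ :=
  (Continuous.matrix_mul continuous_fst continuous_snd).comp_aestronglyMeasurable
    (hF.prodMk hG)

lemma integrable_matmul {A B C : ℕ} {F : Tc → Mat A B} {G : Tc → Mat B C}
    (hF : MemLp F 2 volume) (hG : MemLp G 2 volume) :
    Integrable (fun x => F x * G x) (AddCircle.haarAddCircle) := by
  have hF' := memHaar hF; have hG' := memHaar hG
  have hmul : MemLp (fun x => ‖F x‖ * ‖G x‖) 1 (AddCircle.haarAddCircle) := by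
    have := (hG'.norm).smul (hF'.norm) (p := 2) (q := 2) (r := 1)
    simpa [smul_eq_mul, mul_comm, Pi.mul_def] using this
  refine Integrable.mono' ((memLp_one_iff_integrable.mp hmul).const_mul ((B:ℝ)))
    (aesm_matmul hF'.1 hG'.1) ?_
  filter_upwards with x
  simpa [mul_assoc] using norm_matmul_le (F x) (G x)

lemma mcoeff_entry {M N : ℕ} {F : Tc → Mat M N}
    (hF : Integrable F (AddCircle.haarAddCircle)) (n : ℤ) (i : Fin M) (j : Fin N) :
    mcoeff F n i j = fourierCoeff (fun x => F x i j) n := by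
  set L := (Matrix.entryLinearMap ℂ ℂ i j).toContinuousLinearMap with hLdef
  have hint : Integrable (fun x : Tc => fourier (-n) x • F x) (AddCircle.haarAddCircle) := by
    exact Integrable.smul_of_top_right (f := F) (φ := fun x => fourier (-n) x) hF (fourier_memTop (-n))
  have h := (ContinuousLinearMap.integral_comp_comm L hint).symm
  calc mcoeff F n i j = L (fourierCoeff F n) := rfl
    _ = ∫ x : Tc, L (fourier (-n) x • F x) ∂AddCircle.haarAddCircle := h
    _ = fourierCoeff (fun x => F x i j) n := by
        rw [fourierCoeff]
        exact integral_congr_ae (Filter.Eventually.of_forall fun x => by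
          simp [hLdef, Matrix.entryLinearMap, smul_eq_mul, LinearMap.coe_mk, AddHom.coe_mk]; rfl)

lemma fourierCoeff_congr_ae' {f g : Tc → ℂ}
    (h : f =ᵐ[AddCircle.haarAddCircle] g) (n : ℤ) : fourierCoeff f n = fourierCoeff g n := by
  rw [fourierCoeff, fourierCoeff]
  exact integral_congr_ae (h.mono fun x hx => by dsimp only; rw [hx])

lemma fourierCoeff_conj (g : Tc → ℂ) (m : ℤ) :
    fourierCoeff (fun x => conj (g x)) m = conj (fourierCoeff g (-m)) := by
  rw [fourierCoeff, fourierCoeff, ← integral_conj]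
  refine integral_congr_ae (Filter.Eventually.of_forall fun x => ?_)
  simp only [smul_eq_mul, _root_.map_mul, neg_neg]
  rw [← fourier_neg]

lemma fourierCoeff_mul_fourier (g : Tc → ℂ) (r m : ℤ) :
    fourierCoeff (fun x => g x * fourier r x) m = fourierCoeff g (m - r) := by
  rw [fourierCoeff, fourierCoeff]
  refine integral_congr_ae (Filter.Eventually.of_forall fun x => ?_)
  simp only [smul_eq_mul]
  rw [show -(m - r) = -m + r by ring, fourier_add]
  ring

/-- Key Parseval lemma: Fourier coefficients of a product of two `L²` functions. -/
lemma hasSum_fourierCoeff_mul {f g : Tc → ℂ} (hf : MemLp f 2 volume)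
    (hg : MemLp g 2 volume) (n : ℤ) :
    HasSum (fun m : ℤ => fourierCoeff f m * fourierCoeff g (n - m))
      (fourierCoeff (fun x => f x * g x) n) := by
  have hf' := memHaar hf
  have hg' := memHaar hg
  set a : Tc → ℂ := fun x => conj (g x) * fourier n x with ha
  have ha' : MemLp a 2 (haarAddCircle) := by
    have hconj : MemLp (fun x => conj (g x)) 2 (haarAddCircle) := by
      refine hg'.of_le ?_ (Filter.Eventually.of_forall fun x => by simp)
      exact Complex.continuous_conj.comp_aestronglyMeasurable hg'.1
    have hsm := hconj.smul (fourier_memTop n) (r := 2)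
    have heq : (fun x : Tc => fourier n x) • (fun x => conj (g x)) = a := by
      funext x
      exact mul_comm _ _
    exact heq ▸ hsm
  set A := ha'.toLp a
  set Fp := hf'.toLp f
  have key := (fourierBasis (T := 2*Real.pi)).hasSum_inner_mul_inner A Fp
  have hval : (inner ℂ A Fp : ℂ) = fourierCoeff (fun x => f x * g x) n := by
    rw [MeasureTheory.L2.inner_def, fourierCoeff]
    refine integral_congr_ae ?_
    filter_upwards [ha'.coeFn_toLp, hf'.coeFn_toLp] with x hx1 hx2
    rw [hx1, hx2]
    simp only [RCLike.inner_apply, ha, smul_eq_mul]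
    rw [_root_.map_mul, Complex.conj_conj, ← fourier_neg]
    ring
  have hterm : ∀ m : ℤ, (inner ℂ A (fourierBasis (T := 2*Real.pi) m) : ℂ)
      * (inner ℂ (fourierBasis (T := 2*Real.pi) m) Fp : ℂ)
      = fourierCoeff f m * fourierCoeff g (n - m) := by
    intro m
    have h1 : (inner ℂ (fourierBasis (T := 2*Real.pi) m) Fp : ℂ) = fourierCoeff f m := by
      rw [← HilbertBasis.repr_apply_apply, fourierBasis_repr]
      exact fourierCoeff_congr_ae' hf'.coeFn_toLp m
    have h2 : (inner ℂ A (fourierBasis (T := 2*Real.pi) m) : ℂ)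
        = fourierCoeff g (n - m) := by
      rw [← inner_conj_symm, ← HilbertBasis.repr_apply_apply, fourierBasis_repr]
      have : fourierCoeff (A : Tc → ℂ) m = conj (fourierCoeff g (n - m)) := by
        rw [fourierCoeff_congr_ae' ha'.coeFn_toLp m, ha]
        rw [fourierCoeff_mul_fourier, fourierCoeff_conj, neg_sub]
      rw [this, Complex.conj_conj]
    rw [h1, h2, mul_comm]
  rw [← hval]
  simpa only [hterm] using key

lemma integrable_scalar_mul {f g : Tc → ℂ} (hf : MemLp f 2 volume) (hg : MemLp g 2 volume) :
    Integrable (fun x => f x * g x) (AddCircle.haarAddCircle) := by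
  have := (memHaar hg).smul (memHaar hf) (p := 2) (q := 2) (r := 1)
  refine memLp_one_iff_integrable.mp ?_
  have heq : (f • g) = fun x => f x * g x := by
    funext x; rfl
  exact heq ▸ this

/-- Fourier coefficients of a product of matrix-valued `L²` functions:
entrywise convolution formula. -/
lemma hasSum_mcoeff_mul {A B C : ℕ} {F : Tc → Mat A B} {G : Tc → Mat B C}
    (hF : MemLp F 2 volume) (hG : MemLp G 2 volume) (n : ℤ) (i : Fin A) (j : Fin C) :
    HasSum (fun m : ℤ => (mcoeff F m * mcoeff G (n - m)) i j)
      (mcoeff (fun x => F x * G x) n i j) := by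
  have hval : mcoeff (fun x => F x * G x) n i j
      = ∑ k : Fin B, fourierCoeff (fun x => F x i k * G x k j) n := by
    rw [mcoeff_entry (integrable_matmul hF hG) n i j]
    have h1 : (fun x => (F x * G x) i j) = fun x => ∑ k, F x i k * G x k j := by
      funext x; exact Matrix.mul_apply
    rw [h1, fourierCoeff]
    simp only [fourierCoeff]
    rw [← integral_finset_sum]
    · refine integral_congr_ae (Filter.Eventually.of_forall fun x => ?_)
      simp [Finset.mul_sum]
    · intro k _
      exact (integrable_scalar_mul (entry_memℒp hF i k) (entry_memℒp hG k j)).smul_of_top_right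
        (memLp_top_of_bound ((fourier (-n)).continuous.aestronglyMeasurable) 1
          (Filter.Eventually.of_forall fun x => by
            rw [← fourier_norm (T := 2*Real.pi) (-n)]
            exact ((fourier (-n)) : C(Tc, ℂ)).norm_coe_le_norm x)) |>.congr
        (Filter.Eventually.of_forall fun x => rfl)
  rw [hval]
  have hterm : ∀ m : ℤ, (mcoeff F m * mcoeff G (n - m)) i j
      = ∑ k : Fin B, fourierCoeff (fun x => F x i k) m * fourierCoeff (fun x => G x k j) (n - m) := by
    intro m
    rw [Matrix.mul_apply]
    refine Finset.sum_congr rfl fun k _ => ?_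
    rw [mcoeff_entry ((memHaar hF).integrable (by norm_num)) m i k,
        mcoeff_entry ((memHaar hG).integrable (by norm_num)) (n-m) k j]
  have := hasSum_sum (f := fun (k : Fin B) (m : ℤ) =>
      fourierCoeff (fun x => F x i k) m * fourierCoeff (fun x => G x k j) (n - m))
    (a := fun k => fourierCoeff (fun x => F x i k * G x k j) n) (s := Finset.univ)
    (fun k _ => hasSum_fourierCoeff_mul (entry_memℒp hF i k) (entry_memℒp hG k j) n)
  refine this.congr_fun fun m => ?_
  simpa using hterm m

lemma summable_inv_one_add_sq : Summable (fun n : ℤ => (1 + (n : ℝ) ^ 2)⁻¹) := by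
  have hnat : Summable (fun n : ℕ => (1 + (n : ℝ) ^ 2)⁻¹) := by
    have h1 : Summable (fun n : ℕ => 1 / ((n : ℝ) + 1) ^ 2) := by
      have := (_root_.summable_nat_add_iff (f := fun n : ℕ => 1 / (n : ℝ) ^ 2) 1).2
        (Real.summable_one_div_nat_pow.mpr one_lt_two)
      simpa using this
    refine Summable.of_nonneg_of_le (fun n => by positivity) (fun n => ?_) (h1.mul_left 2)
    rw [mul_one_div, inv_eq_one_div, div_le_div_iff₀ (by positivity) (by positivity)]
    nlinarith [sq_nonneg ((n:ℝ) - 1)]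
  refine Summable.of_nat_of_neg ?_ ?_ <;> simpa using hnat

lemma summable_h1_entry_coeff {M N : ℕ} {G : Tc → Mat M N} (hG : InH1Plus G)
    (i : Fin M) (j : Fin N) :
    Summable (fun n : ℤ => ‖fourierCoeff (fun x => G x i j) n‖) := by
  have hint : Integrable G (AddCircle.haarAddCircle) :=
    (memHaar hG.1.1).integrable (by norm_num)
  have hmaj : Summable (fun n : ℤ =>
      ((1 + (n : ℝ) ^ 2)⁻¹ + (1 + (n : ℝ) ^ 2) * frobSq (mcoeff G n)) / 2) :=
    (summable_inv_one_add_sq.add hG.2).div_const 2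
  refine Summable.of_nonneg_of_le (fun n => norm_nonneg _) (fun n => ?_) hmaj
  rw [← mcoeff_entry hint n i j]
  set t := 1 + (n : ℝ) ^ 2 with ht
  have ht1 : (1:ℝ) ≤ t := by rw [ht]; nlinarith [sq_nonneg ((n:ℝ))]
  clear_value t
  have hsq : ‖mcoeff G n i j‖ ^ 2 ≤ frobSq (mcoeff G n) := by
    rw [frobSq]
    have h1 : ‖mcoeff G n i j‖ ^ 2 ≤ ∑ l, ‖mcoeff G n i l‖ ^ 2 :=
      Finset.single_le_sum (f := fun l => ‖mcoeff G n i l‖ ^ 2)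
        (fun l _ => by positivity) (Finset.mem_univ j)
    refine h1.trans ?_
    exact Finset.single_le_sum (f := fun k => ∑ l, ‖mcoeff G n k l‖ ^ 2)
      (fun k _ => by positivity) (Finset.mem_univ i)
  have h2 := sq_nonneg (t * ‖mcoeff G n i j‖ - 1)
  have ht0 : t ≠ 0 := by nlinarith
  have hu0 : (0:ℝ) ≤ t⁻¹ := by positivity
  have h3 : t * ‖mcoeff G n i j‖ ^ 2 ≤ t * frobSq (mcoeff G n) := by nlinarith
  have e : t⁻¹ * (t * ‖mcoeff G n i j‖ - 1) ^ 2
      = t * ‖mcoeff G n i j‖ ^ 2 - 2 * ‖mcoeff G n i j‖ + t⁻¹ := by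
    field_simp
    ring
  have h4 : 0 ≤ t * ‖mcoeff G n i j‖ ^ 2 - 2 * ‖mcoeff G n i j‖ + t⁻¹ :=
    e ▸ mul_nonneg hu0 h2
  linarith [h3, h4]

lemma h1_entry_bound {M N : ℕ} {G : Tc → Mat M N} (hG : InH1Plus G)
    (i : Fin M) (j : Fin N) :
    ∃ C : ℝ, ∀ᵐ x ∂(volume : Measure Tc), ‖G x i j‖ ≤ C := by
  set g : Tc → ℂ := fun x => G x i j with hgdef
  have hg2 : MemLp g 2 (AddCircle.haarAddCircle) := memHaar (entry_memℒp hG.1.1 i j)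
  have hsumC : Summable (fun n : ℤ => fourierCoeff g n • (fourier n : C(Tc, ℂ))) := by
    refine Summable.of_norm ?_
    simpa [norm_smul, fourier_norm] using summable_h1_entry_coeff hG i j
  set K : C(Tc, ℂ) := ∑' n : ℤ, fourierCoeff g n • (fourier n : C(Tc, ℂ)) with hK
  have hKsum : HasSum (fun n : ℤ => fourierCoeff g n • (fourier n : C(Tc, ℂ))) K :=
    hsumC.hasSum
  have hKsum2 := hKsum.mapL (ContinuousMap.toLp (E := ℂ) 2 AddCircle.haarAddCircle ℂ)
  have hgsum := hasSum_fourier_series_L2 (hg2.toLp g)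
  have hcoeq : ∀ n : ℤ, fourierCoeff (hg2.toLp g : Tc → ℂ) n = fourierCoeff g n :=
    fun n => fourierCoeff_congr_ae' (hg2.coeFn_toLp) n
  have heq : hg2.toLp g = ContinuousMap.toLp (E := ℂ) 2 AddCircle.haarAddCircle ℂ K := by
    refine hgsum.unique ?_
    convert hKsum2 using 2 with n
    rw [hcoeq n, _root_.map_smul]
  have hae : g =ᵐ[AddCircle.haarAddCircle] K := by
    have h1 := hg2.coeFn_toLp
    have h2 := ContinuousMap.coeFn_toLp (E := ℂ) (p := 2)
      AddCircle.haarAddCircle (𝕜 := ℂ) K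
    rw [heq] at h1
    exact (h1.symm.trans h2 : _)
  refine ⟨‖K‖, aeVol ?_⟩
  filter_upwards [hae] with x hx
  rw [hgdef] at hx
  simp only at hx
  rw [hx]
  exact K.norm_coe_le_norm x

lemma h1_memTop {M N : ℕ} {G : Tc → Mat M N} (hG : InH1Plus G) :
    MemLp G ⊤ volume := by
  have hb := fun i j => h1_entry_bound hG i j
  choose C hC using hb
  have hae : ∀ᵐ x ∂(volume : Measure Tc), ∀ i j, ‖G x i j‖ ≤ C i j := by
    rw [MeasureTheory.ae_all_iff]
    intro i
    rw [MeasureTheory.ae_all_iff]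
    exact hC i
  set B : ℝ := ∑ i, ∑ j, |C i j| with hB
  refine memLp_top_of_bound hG.1.1.1 B ?_
  filter_upwards [hae] with x hx
  have hBnn : 0 ≤ B := by positivity
  rw [Matrix.norm_le_iff hBnn]
  intro i j
  refine (hx i j).trans ?_
  calc C i j ≤ |C i j| := le_abs_self _
    _ ≤ ∑ j', |C i j'| := Finset.single_le_sum (f := fun j' => |C i j'|)
        (fun _ _ => abs_nonneg _) (Finset.mem_univ j)
    _ ≤ B := Finset.single_le_sum (f := fun i' => ∑ j', |C i' j'|)
        (fun _ _ => by positivity) (Finset.mem_univ i)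

lemma memℒp_top_bound {M N : ℕ} {G : Tc → Mat M N} (hG : MemLp G ⊤ volume) :
    ∃ C : ℝ, 0 ≤ C ∧ ∀ᵐ x ∂(volume : Measure Tc), ‖G x‖ ≤ C := by
  refine ⟨(eLpNormEssSup G volume).toReal, ENNReal.toReal_nonneg, ?_⟩
  have h := enorm_ae_le_eLpNormEssSup G volume
  have hfin : eLpNormEssSup G volume ≠ ∞ := by
    have h2 := hG.2
    rw [eLpNorm_exponent_top] at h2
    exact h2.ne
  filter_upwards [h] with x hx
  have := ENNReal.toReal_mono hfin hx
  exact (toReal_enorm (G x)).symm.trans_le this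

lemma memℒp_matmul_top_right {A B C : ℕ} {F : Tc → Mat A B} {G : Tc → Mat B C}
    (hF : MemLp F 2 volume) (hG : MemLp G ⊤ volume) :
    MemLp (fun x => F x * G x) 2 volume := by
  obtain ⟨c, hc0, hc⟩ := memℒp_top_bound hG
  refine MemLp.of_le (hF.norm.const_mul ((B : ℝ) * c)) (aesm_matmul hF.1 hG.1) ?_
  filter_upwards [hc] with x hx
  refine (norm_matmul_le (F x) (G x)).trans ?_
  have h1 : (B : ℝ) * ‖F x‖ * ‖G x‖ ≤ (B : ℝ) * c * ‖F x‖ :=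
    calc (B : ℝ) * ‖F x‖ * ‖G x‖ ≤ (B : ℝ) * ‖F x‖ * c :=
          mul_le_mul_of_nonneg_left hx (by positivity)
      _ = (B : ℝ) * c * ‖F x‖ := by ring
  exact h1.trans (le_abs_self _)

lemma memℒp_matmul_top_left {A B C : ℕ} {F : Tc → Mat A B} {G : Tc → Mat B C}
    (hF : MemLp F ⊤ volume) (hG : MemLp G 2 volume) :
    MemLp (fun x => F x * G x) 2 volume := by
  obtain ⟨c, hc0, hc⟩ := memℒp_top_bound hF
  refine MemLp.of_le (hG.norm.const_mul ((B : ℝ) * c)) (aesm_matmul hF.1 hG.1) ?_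
  filter_upwards [hc] with x hx
  refine (norm_matmul_le (F x) (G x)).trans ?_
  have h1 : (B : ℝ) * ‖F x‖ * ‖G x‖ ≤ (B : ℝ) * c * ‖G x‖ := by
    refine mul_le_mul_of_nonneg_right ?_ (norm_nonneg _)
    exact mul_le_mul_of_nonneg_left hx (by positivity)
  exact h1.trans (le_abs_self _)

lemma memℒp_conjT {A B : ℕ} {p : ℝ≥0∞} {H : Tc → Mat A B} (hH : MemLp H p volume) :
    MemLp (fun x => (H x)ᴴ) p volume := by
  refine MemLp.of_le hH ?_ (Filter.Eventually.of_forall fun x => (norm_conjT (H x)).le)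
  exact (Continuous.matrix_conjTranspose continuous_id).comp_aestronglyMeasurable hH.1

lemma mcoeff_conjT {A B : ℕ} {H : Tc → Mat A B} (hH : MemLp H 2 volume) (q : ℤ) :
    mcoeff (fun x => (H x)ᴴ) q = (mcoeff H (-q))ᴴ := by
  have hint : Integrable H (AddCircle.haarAddCircle) :=
    (memHaar hH).integrable (by norm_num)
  have hint' : Integrable (fun x => (H x)ᴴ) (AddCircle.haarAddCircle) :=
    (memHaar (memℒp_conjT hH)).integrable (by norm_num)
  ext i j
  rw [mcoeff_entry hint' q i j, Matrix.conjTranspose_apply, mcoeff_entry hint (-q) j i]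
  have : (fun x => (H x)ᴴ i j) = fun x => conj (H x j i) := by
    funext x; rw [Matrix.conjTranspose_apply]; rfl
  rw [this, fourierCoeff_conj]; rfl

end MatAux

/-- For `U ∈ H^{1/2}₊(ℂ^{M×N})`, `V ∈ H^{1/2}₊(ℂ^{P×N})`,
`W ∈ H^{1/2}₊(ℂ^{P×Q})`, the double shifted Hankel operators factor as differences
of Toeplitz operators on the dense domain `H¹₊`:
`K^r_U K^l_V = T^r_{UV*} − T^r_U T^r_{V*}` on `L²₊(ℂ^{P×d})` and
`K^l_V K^r_W = T^l_{W*V} − T^l_V T^l_{W*}` on `L²₊(ℂ^{d×Q})`.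
Here `Kl` represents `K^l_V G`, `R` represents `T^r_{V*} G = Π_{≥0}(V*G)`,
`Kr` represents `K^r_W F`, `R₂` represents `T^l_{W*} F = Π_{≥0}(FW*)`, and the
identities are stated through the Fourier coefficients of the images at
nonnegative frequencies. -/
theorem stmt14 {M N P Q d : ℕ}
    (U : Tc → Mat M N) (hU : InHhalfPlus U)
    (V : Tc → Mat P N) (hV : InHhalfPlus V)
    (W : Tc → Mat P Q) (hW : InHhalfPlus W)
    (G : Tc → Mat P d) (hG : InH1Plus G)
    (F : Tc → Mat d Q) (hF : InH1Plus F)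
    (Kl : Tc → Mat d N) (hKl : MemLp Kl 2 volume)
    (hKl' : ∀ n : ℤ, mcoeff Kl n
      = if 0 ≤ n then mcoeff (fun x => (G x)ᴴ * V x) (n + 1) else 0)
    (R : Tc → Mat N d) (hR : IsProj (fun x => (V x)ᴴ * G x) R)
    (Kr : Tc → Mat P d) (hKr : MemLp Kr 2 volume)
    (hKr' : ∀ n : ℤ, mcoeff Kr n
      = if 0 ≤ n then mcoeff (fun x => W x * (F x)ᴴ) (n + 1) else 0)
    (R₂ : Tc → Mat d P) (hR₂ : IsProj (fun x => F x * (W x)ᴴ) R₂) :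
    (∀ n : ℤ, 0 ≤ n →
      mcoeff (fun x => U x * (Kl x)ᴴ) (n + 1)
        = mcoeff (fun x => U x * (V x)ᴴ * G x) n
          - mcoeff (fun x => U x * R x) n) ∧
    (∀ n : ℤ, 0 ≤ n →
      mcoeff (fun x => (Kr x)ᴴ * V x) (n + 1)
        = mcoeff (fun x => F x * (W x)ᴴ * V x) n
          - mcoeff (fun x => R₂ x * V x) n) := by
  have hU2 := hU.1.1
  have hV2 := hV.1.1
  have hW2 := hW.1.1
  have hGtop := h1_memTop hG
  have hFtop := h1_memTop hF
  have hS : MemLp (fun x => (V x)ᴴ * G x) 2 volume :=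
    memℒp_matmul_top_right (memℒp_conjT hV2) hGtop
  have hH : MemLp (fun x => (G x)ᴴ * V x) 2 volume :=
    memℒp_matmul_top_left (memℒp_conjT hGtop) hV2
  have hS2 : MemLp (fun x => F x * (W x)ᴴ) 2 volume :=
    memℒp_matmul_top_left hFtop (memℒp_conjT hW2)
  have hH2 : MemLp (fun x => W x * (F x)ᴴ) 2 volume :=
    memℒp_matmul_top_right hW2 (memℒp_conjT hFtop)
  constructor
  · -- first identity
    intro n hn
    have hKlT : ∀ q : ℤ, mcoeff (fun x => (Kl x)ᴴ) q
        = if q ≤ 0 then mcoeff (fun x => (V x)ᴴ * G x) (q - 1) else 0 := by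
      intro q
      rw [mcoeff_conjT hKl q, hKl' (-q)]
      by_cases h : q ≤ 0
      · rw [if_pos (neg_nonneg.mpr h), if_pos h,
          show -q + 1 = -(q-1) by ring, ← mcoeff_conjT hH (q-1)]
        have hcf : (fun x : Tc => ((G x)ᴴ * V x)ᴴ) = (fun x => (V x)ᴴ * G x) := by
          funext x
          rw [Matrix.conjTranspose_mul, Matrix.conjTranspose_conjTranspose]
        rw [hcf]
      · rw [if_neg (fun hq => h (neg_nonneg.mp hq)), if_neg h, Matrix.conjTranspose_zero]
    ext i j
    have h1 := hasSum_mcoeff_mul hU2 (memℒp_conjT hKl) (n+1) i j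
    have h1' : HasSum
        (fun m : ℤ => if n+1 ≤ m then (mcoeff U m * mcoeff (fun x => (V x)ᴴ * G x) (n - m)) i j else 0)
        (mcoeff (fun x => U x * (Kl x)ᴴ) (n+1) i j) := by
      refine h1.congr_fun fun m => ?_
      rw [hKlT (n+1-m)]
      by_cases h : n+1 ≤ m
      · rw [if_pos (show (n:ℤ)+1-m ≤ 0 by omega), if_pos h,
          show (n:ℤ)+1-m-1 = n-m by ring]
      · rw [if_neg (show ¬ ((n:ℤ)+1-m ≤ 0) by omega), if_neg h, Matrix.mul_zero,
          Matrix.zero_apply]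
    have h2 := hasSum_mcoeff_mul hU2 hS n i j
    have h3 := hasSum_mcoeff_mul hU2 hR.1 n i j
    have h3' : HasSum
        (fun m : ℤ => if 0 ≤ n - m then (mcoeff U m * mcoeff (fun x => (V x)ᴴ * G x) (n - m)) i j else 0)
        (mcoeff (fun x => U x * R x) n i j) := by
      refine h3.congr_fun fun m => ?_
      rw [hR.2 (n-m)]
      by_cases h : (0:ℤ) ≤ n - m
      · rw [if_pos h, if_pos h]
      · rw [if_neg h, if_neg h, Matrix.mul_zero, Matrix.zero_apply]
    have hadd := h1'.add h3'
    have hfull : HasSum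
        (fun m : ℤ => (mcoeff U m * mcoeff (fun x => (V x)ᴴ * G x) (n - m)) i j)
        ((mcoeff (fun x => U x * (Kl x)ᴴ) (n+1) i j) + (mcoeff (fun x => U x * R x) n i j)) := by
      refine hadd.congr_fun fun m => ?_
      by_cases h : n+1 ≤ m
      · rw [if_pos h, if_neg (show ¬ ((0:ℤ) ≤ n - m) by omega), add_zero]
      · rw [if_neg h, if_pos (show (0:ℤ) ≤ n - m by omega), zero_add]
    have hfeq : (fun x => U x * (V x)ᴴ * G x) = (fun x => U x * ((V x)ᴴ * G x)) :=
      funext fun x => Matrix.mul_assoc _ _ _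
    have hT := h2.unique hfull
    rw [Matrix.sub_apply, hfeq]
    exact eq_sub_of_add_eq hT.symm
  · -- second identity
    intro n hn
    have hKrT : ∀ q : ℤ, mcoeff (fun x => (Kr x)ᴴ) q
        = if q ≤ 0 then mcoeff (fun x => F x * (W x)ᴴ) (q - 1) else 0 := by
      intro q
      rw [mcoeff_conjT hKr q, hKr' (-q)]
      by_cases h : q ≤ 0
      · rw [if_pos (neg_nonneg.mpr h), if_pos h,
          show -q + 1 = -(q-1) by ring, ← mcoeff_conjT hH2 (q-1)]
        have hcf : (fun x : Tc => (W x * (F x)ᴴ)ᴴ) = (fun x => F x * (W x)ᴴ) := by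
          funext x
          rw [Matrix.conjTranspose_mul, Matrix.conjTranspose_conjTranspose]
        rw [hcf]
      · rw [if_neg (fun hq => h (neg_nonneg.mp hq)), if_neg h, Matrix.conjTranspose_zero]
    ext i j
    have h1 := hasSum_mcoeff_mul (memℒp_conjT hKr) hV2 (n+1) i j
    have h1' : HasSum
        (fun m : ℤ => if m ≤ 0 then (mcoeff (fun x => F x * (W x)ᴴ) (m-1) * mcoeff V (n+1-m)) i j else 0)
        (mcoeff (fun x => (Kr x)ᴴ * V x) (n+1) i j) := by
      refine h1.congr_fun fun m => ?_
      rw [hKrT m]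
      by_cases h : m ≤ 0
      · rw [if_pos h, if_pos h]
      · rw [if_neg h, if_neg h, Matrix.zero_mul, Matrix.zero_apply]
    have h1'' := ((Equiv.addRight (1:ℤ)).hasSum_iff).mpr h1'
    have h1''' : HasSum
        (fun m : ℤ => if m + 1 ≤ 0 then (mcoeff (fun x => F x * (W x)ᴴ) m * mcoeff V (n-m)) i j else 0)
        (mcoeff (fun x => (Kr x)ᴴ * V x) (n+1) i j) := by
      refine h1''.congr_fun fun m => ?_
      simp only [Function.comp_apply, Equiv.coe_addRight]
      by_cases h : m + 1 ≤ 0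
      · rw [if_pos h, if_pos h, show m+1-1 = m by ring, show n+1-(m+1) = n-m by ring]
      · rw [if_neg h, if_neg h]
    have h2 := hasSum_mcoeff_mul hS2 hV2 n i j
    have h3 := hasSum_mcoeff_mul hR₂.1 hV2 n i j
    have h3' : HasSum
        (fun m : ℤ => if 0 ≤ m then (mcoeff (fun x => F x * (W x)ᴴ) m * mcoeff V (n-m)) i j else 0)
        (mcoeff (fun x => R₂ x * V x) n i j) := by
      refine h3.congr_fun fun m => ?_
      rw [hR₂.2 m]
      by_cases h : (0:ℤ) ≤ m
      · rw [if_pos h, if_pos h]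
      · rw [if_neg h, if_neg h, Matrix.zero_mul, Matrix.zero_apply]
    have hadd := h1'''.add h3'
    have hfull : HasSum
        (fun m : ℤ => (mcoeff (fun x => F x * (W x)ᴴ) m * mcoeff V (n-m)) i j)
        ((mcoeff (fun x => (Kr x)ᴴ * V x) (n+1) i j) + (mcoeff (fun x => R₂ x * V x) n i j)) := by
      refine hadd.congr_fun fun m => ?_
      by_cases h : m + 1 ≤ 0
      · rw [if_pos h, if_neg (show ¬ ((0:ℤ) ≤ m) by omega), add_zero]
      · rw [if_neg h, if_pos (show (0:ℤ) ≤ m by omega), zero_add]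
    have hT := h2.unique hfull
    rw [Matrix.sub_apply]
    exact eq_sub_of_add_eq hT.symm
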